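/- arXiv:quant-ph/0506229 — 4 statements merged into one kernel-verified Lean document; each statement's English description precedes it below -/
import Mathlib

section
/- Let d ≥ 1 and let (M_j)_{j ∈ J} be a finite family of d×d complex matrices such that ∑_{j ∈ J} M_jᴴ M_j ≤ 1 in the Loewner order (i.e. 1 − ∑_j M_jᴴ M_j is positive semidefinite, where M_jᴴ denotes the conjugate transpose and 1 the identity matrix). Then ∑_{j ∈ J} |det M_j|^{2/d} ≤ 1. -/
open scoped BigOperators Matrix ComplexOrder

/-!
Since `|det M|² = det (Mᴴ M)` is the product of the eigenvalues of the positive semidefinite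
matrix `Mᴴ M`, AM-GM bounds `|det M|^(2/d)` by `tr (Mᴴ M) / d`. Summing over `j`, the traces
add up to `tr (∑ j, (M j)ᴴ M j) ≤ tr 1 = d`.
-/

theorem Real.prod_rpow_inv_card_le_sum_div_card {ι : Type*} [Fintype ι] [Nonempty ι]
    (z : ι → ℝ) (hz : ∀ i, 0 ≤ z i) :
    (∏ i, z i) ^ (Fintype.card ι : ℝ)⁻¹ ≤ (∑ i, z i) / Fintype.card ι := by
  simpa using Real.geom_mean_le_arith_mean Finset.univ (fun _ ↦ 1) z (fun _ _ ↦ zero_le_one)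
    (by simp [Fintype.card_pos]) (fun i _ ↦ hz i)

namespace Matrix

variable {n 𝕜 : Type*} [Fintype n] [DecidableEq n] [RCLike 𝕜]

theorem PosSemidef.re_det_rpow_inv_card_le_re_trace_div [Nonempty n] {A : Matrix n n 𝕜}
    (hA : A.PosSemidef) :
    RCLike.re A.det ^ (Fintype.card n : ℝ)⁻¹ ≤ RCLike.re A.trace / Fintype.card n := by
  rw [hA.isHermitian.det_eq_prod_eigenvalues, hA.isHermitian.trace_eq_sum_eigenvalues,
    ← RCLike.ofReal_prod, ← RCLike.ofReal_sum, RCLike.ofReal_re, RCLike.ofReal_re]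
  exact Real.prod_rpow_inv_card_le_sum_div_card _ hA.eigenvalues_nonneg

theorem re_det_conjTranspose_mul_self (M : Matrix n n 𝕜) :
    RCLike.re (Mᴴ * M).det = ‖M.det‖ ^ 2 := by
  rw [det_mul, det_conjTranspose, RCLike.star_def, RCLike.conj_mul, ← RCLike.ofReal_pow,
    RCLike.ofReal_re]

end Matrix

/-- **Kraus operator inequality.** If a finite family of `d × d` complex matrices `M j`
satisfies `∑ j, (M j)ᴴ * M j ≤ 1` in the Loewner order (i.e. `1 - ∑ j, (M j)ᴴ * M j` is
positive semidefinite), then `∑ j, |det (M j)| ^ (2 / d) ≤ 1`. -/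
theorem sum_abs_det_rpow_le_one
    (d : ℕ) (hd : 1 ≤ d) (J : Type*) [Fintype J]
    (M : J → Matrix (Fin d) (Fin d) ℂ)
    (h : ((1 : Matrix (Fin d) (Fin d) ℂ) - ∑ j, (M j)ᴴ * M j).PosSemidef) :
    ∑ j, ‖(M j).det‖ ^ ((2 : ℝ) / d) ≤ 1 := by
  have : Nonempty (Fin d) := ⟨⟨0, hd⟩⟩
  have hd₀ : (0 : ℝ) < d := by exact_mod_cast hd
  have htrace : ∑ j, ((M j)ᴴ * M j).trace.re ≤ d := by
    simpa [Matrix.trace_sub, Matrix.trace_sum, Complex.re_sum] using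
      Complex.re_le_re h.trace_nonneg
  have hdet (j : J) : ‖(M j).det‖ ^ ((2 : ℝ) / d) = ((M j)ᴴ * M j).det.re ^ (d : ℝ)⁻¹ := by
    rw [← RCLike.re_to_complex, Matrix.re_det_conjTranspose_mul_self, ← Real.rpow_natCast,
      ← Real.rpow_mul (norm_nonneg _), div_eq_mul_inv, Nat.cast_ofNat]
  calc ∑ j, ‖(M j).det‖ ^ ((2 : ℝ) / d)
      = ∑ j, ((M j)ᴴ * M j).det.re ^ (d : ℝ)⁻¹ := Finset.sum_congr rfl fun j _ ↦ hdet j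
    _ ≤ ∑ j, ((M j)ᴴ * M j).trace.re / d := by
        gcongr with j
        simpa using
          (Matrix.posSemidef_conjTranspose_mul_self (M j)).re_det_rpow_inv_card_le_re_trace_div
    _ = (∑ j, ((M j)ᴴ * M j).trace.re) / d := (Finset.sum_div ..).symm
    _ ≤ 1 := (div_le_one hd₀).mpr htrace
end

section
/- Let d ≥ 1, let n ≤ m, let U be an m×m complex unitary matrix, and let λ_1, …, λ_n be nonnegative reals. Then ∑_{l=1}^{m} | ∑_{k=1}^{n} (U_{lk})^d · λ_k |^{2/d} ≤ ∑_{k=1}^{n} λ_k^{2/d}. -/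
open scoped BigOperators Matrix

/-!
Write `p = 2 / d` and let `A` be the `m × n` matrix of the first `n` columns of `U`, so `Aᴴ A = 1`.
For `d = 1` we have `p = 2` and the left side is `‖A λ‖² = ‖λ‖²`. For `d ≥ 2` we have `p ≤ 1`, so
`t ↦ t ^ p` is subadditive on `[0, ∞)`; with the triangle inequality this bounds the `l`-th term by
`∑ₖ |A_{lk}|^{dp} λₖ^p = ∑ₖ |A_{lk}|² λₖ^p`, and the columns of `A` are unit vectors.
-/

theorem Real.rpow_sum_le_sum_rpow {ι : Type*} (s : Finset ι) {f : ι → ℝ}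
    (hf : ∀ i ∈ s, 0 ≤ f i) {p : ℝ} (hp : 0 < p) (hp1 : p ≤ 1) :
    (∑ i ∈ s, f i) ^ p ≤ ∑ i ∈ s, f i ^ p :=
  Finset.le_sum_of_subadditive_on_pred (· ^ p) (0 ≤ ·) (by simp [Real.zero_rpow hp.ne'])
    (fun _ _ hx hy => Real.rpow_add_le_add_rpow hx hy hp.le hp1) (fun _ _ => add_nonneg) f hf

section

variable {𝕜 ι κ : Type*} [RCLike 𝕜] [Fintype ι] [Fintype κ]

namespace Matrix

theorem star_dotProduct_self_eq_sum_norm_sq (x : ι → 𝕜) :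
    star x ⬝ᵥ x = ((∑ i, ‖x i‖ ^ 2 : ℝ) : 𝕜) := by
  simp [dotProduct, RCLike.conj_mul]

theorem sum_norm_mulVec_sq_of_conjTranspose_mul_self [DecidableEq κ] {A : Matrix ι κ 𝕜}
    (hA : Aᴴ * A = 1) (c : κ → 𝕜) : ∑ l, ‖(A *ᵥ c) l‖ ^ 2 = ∑ k, ‖c k‖ ^ 2 := by
  have h : star (A *ᵥ c) ⬝ᵥ (A *ᵥ c) = star c ⬝ᵥ c := by
    rw [star_mulVec, dotProduct_mulVec, vecMul_vecMul, hA, vecMul_one]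
  simpa only [star_dotProduct_self_eq_sum_norm_sq, RCLike.ofReal_inj] using h

theorem sum_norm_sq_apply_of_conjTranspose_mul_self [DecidableEq κ] {A : Matrix ι κ 𝕜}
    (hA : Aᴴ * A = 1) (k : κ) : ∑ l, ‖A l k‖ ^ 2 = 1 := by
  simpa [Pi.single_apply, apply_ite] using sum_norm_mulVec_sq_of_conjTranspose_mul_self hA (Pi.single k 1)

end Matrix

theorem norm_sum_pow_mul_rpow_le {d : ℕ} (hd : 2 ≤ d) (a : κ → 𝕜) {lam : κ → ℝ}
    (hlam : ∀ k, 0 ≤ lam k) :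
    ‖∑ k, a k ^ d * (lam k : 𝕜)‖ ^ ((2 : ℝ) / d) ≤ ∑ k, ‖a k‖ ^ 2 * lam k ^ ((2 : ℝ) / d) := by
  have hp : 0 < (2 : ℝ) / d := by positivity
  have hp1 : (2 : ℝ) / d ≤ 1 := by
    rw [div_le_one (by positivity)]
    exact_mod_cast hd
  calc ‖∑ k, a k ^ d * (lam k : 𝕜)‖ ^ ((2 : ℝ) / d)
      ≤ (∑ k, ‖a k‖ ^ d * lam k) ^ ((2 : ℝ) / d) := by
        gcongr
        refine (norm_sum_le _ _).trans_eq (Finset.sum_congr rfl fun k _ => ?_)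
        rw [norm_mul, norm_pow, RCLike.norm_ofReal, abs_of_nonneg (hlam k)]
    _ ≤ ∑ k, (‖a k‖ ^ d * lam k) ^ ((2 : ℝ) / d) :=
        Real.rpow_sum_le_sum_rpow _ (fun k _ => by have := hlam k; positivity) hp hp1
    _ = ∑ k, ‖a k‖ ^ 2 * lam k ^ ((2 : ℝ) / d) := by
        refine Finset.sum_congr rfl fun k _ => ?_
        have hd0 : (d : ℝ) ≠ 0 := by positivity
        rw [Real.mul_rpow (by positivity) (hlam k), ← Real.rpow_natCast_mul (norm_nonneg _),
          mul_div_cancel₀ _ hd0, Real.rpow_two]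

theorem Matrix.sum_norm_sum_pow_mul_rpow_le {d : ℕ} (hd : 2 ≤ d) (A : Matrix ι κ 𝕜)
    (hA : ∀ k, ∑ l, ‖A l k‖ ^ 2 ≤ 1) {lam : κ → ℝ} (hlam : ∀ k, 0 ≤ lam k) :
    ∑ l, ‖∑ k, A l k ^ d * (lam k : 𝕜)‖ ^ ((2 : ℝ) / d) ≤ ∑ k, lam k ^ ((2 : ℝ) / d) :=
  calc ∑ l, ‖∑ k, A l k ^ d * (lam k : 𝕜)‖ ^ ((2 : ℝ) / d)
      ≤ ∑ l, ∑ k, ‖A l k‖ ^ 2 * lam k ^ ((2 : ℝ) / d) :=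
        Finset.sum_le_sum fun l _ => norm_sum_pow_mul_rpow_le hd (A l) hlam
    _ = ∑ k, (∑ l, ‖A l k‖ ^ 2) * lam k ^ ((2 : ℝ) / d) := by
        rw [Finset.sum_comm]
        simp_rw [Finset.sum_mul]
    _ ≤ ∑ k, lam k ^ ((2 : ℝ) / d) :=
        Finset.sum_le_sum fun k _ =>
          mul_le_of_le_one_left (Real.rpow_nonneg (hlam k) _) (hA k)

end

/-- **Upper bound of Theorem 4.** For an `m × m` unitary `U`, `n ≤ m` and nonnegative
reals `λ₁, …, λ_n`, one has `∑_l |∑_k (U_{lk})^d λ_k|^{2/d} ≤ ∑_k λ_k^{2/d}`. -/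
theorem sum_abs_rpow_le_of_unitary
    (d m n : ℕ) (hd : 1 ≤ d) (hnm : n ≤ m)
    (U : Matrix (Fin m) (Fin m) ℂ) (hU : U ∈ Matrix.unitaryGroup (Fin m) ℂ)
    (lam : Fin n → ℝ) (hlam : ∀ k, 0 ≤ lam k) :
    ∑ l : Fin m,
        ‖∑ k : Fin n, (U l (Fin.castLE hnm k)) ^ d * (lam k : ℂ)‖
          ^ ((2 : ℝ) / d)
      ≤ ∑ k : Fin n, lam k ^ ((2 : ℝ) / d) := by
  set A : Matrix (Fin m) (Fin n) ℂ := U.submatrix id (Fin.castLE hnm)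
  have hA : Aᴴ * A = 1 := by
    rw [Matrix.conjTranspose_submatrix, ← Matrix.submatrix_mul _ _ _ _ _ Function.bijective_id,
      ← Matrix.star_eq_conjTranspose, Matrix.mem_unitaryGroup_iff'.mp hU,
      Matrix.submatrix_one _ (Fin.castLE_injective hnm)]
  obtain rfl | hd := hd.eq_or_lt
  · have h := Matrix.sum_norm_mulVec_sq_of_conjTranspose_mul_self hA (fun k => (lam k : ℂ))
    simp only [Matrix.mulVec, dotProduct, Complex.norm_real, Real.norm_eq_abs, sq_abs] at h
    simp only [pow_one, Nat.cast_one, div_one, Real.rpow_two]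
    exact h.le
  · exact Matrix.sum_norm_sum_pow_mul_rpow_le hd A
      (fun k => (Matrix.sum_norm_sq_apply_of_conjTranspose_mul_self hA k).le) hlam
end

section
/- Fix d ≥ 1 and m ≥ 1. Let a^{(1)}, …, a^{(m)} be d×d complex matrices whose τ-tensor is diagonal with diagonal entries λ_1, …, λ_m (i.e. τ^{a}_{k_1…k_d} = 0 unless k_1 = ⋯ = k_d, and τ^{a}_{k…k} = λ_k). Let U be an m×m complex unitary matrix and set b^{(l)} = ∑_{k=1}^{m} U_{lk} a^{(k)}. Then for every l, det(b^{(l)}) = d^{−d/2} · ∑_{k=1}^{m} (U_{lk})^d λ_k, and hence the G-concurrence of the sub-normalized state with coefficient matrix b^{(l)} equals d·|det b^{(l)}|^{2/d} = | ∑_{k=1}^{m} (U_{lk})^d λ_k |^{2/d}. -/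
/-!
Expanding `det (∑ₖ cₖ • aₖ)` multilinearly in the rows gives `∑_r (∏ᵢ c_{r i}) det M(r)`, where
row `i` of `M(r)` is row `i` of `a_{r i}`. The weight `∏ᵢ c_{r i}` is invariant under `r ↦ r ∘ σ`,
so the sum may be symmetrized over `σ ∈ S_d`; the symmetrized determinants are the entries of the
τ-tensor. A diagonal τ-tensor kills every non-constant `r`, leaving `∑ₖ cₖ^d det aₖ`, and the
diagonal entries are `τ_{k…k} = d^{d/2} det aₖ`.
-/

open scoped BigOperators Matrix

/-- The τ-tensor of a family `a : Fin m → Matrix (Fin d) (Fin d) ℂ`: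
`τ^a_{k₁…k_d} = (d^{d/2} / d!) ∑_{σ ∈ S_d} det (M(σ))`, where the `i`-th row of `M(σ)`
is the `i`-th row of `a (k (σ i))`. -/
noncomputable def tauTensor (d m : ℕ) (a : Fin m → Matrix (Fin d) (Fin d) ℂ)
    (k : Fin d → Fin m) : ℂ :=
  (((Real.sqrt d ^ d / d.factorial : ℝ)) : ℂ) *
    ∑ σ : Equiv.Perm (Fin d), (Matrix.of fun i j => a (k (σ i)) i j).det

open Finset
open Finset

section MixedRowDet

variable {n ι : Type*} [Fintype n] [DecidableEq n]

def mixedRowDet {R : Type*} [CommRing R] (a : ι → Matrix n n R) (r : n → ι) : R :=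
  (Matrix.of fun i j => a (r i) i j).det

theorem mixedRowDet_const {R : Type*} [CommRing R] (a : ι → Matrix n n R) (k : ι) :
    mixedRowDet a (fun _ => k) = (a k).det :=
  rfl

theorem det_sum_smul [Fintype ι] {R : Type*} [CommRing R] (c : ι → R) (a : ι → Matrix n n R) :
    (∑ k, c k • a k).det = ∑ r : n → ι, (∏ i, c (r i)) * mixedRowDet a r := by
  have hrows : (∑ k, c k • a k) = fun i => ∑ k, c k • a k i := by
    funext i; exact Finset.sum_apply i univ _
  rw [hrows]
  refine ((Matrix.detRowAlternating : (n → R) [⋀^n]→ₗ[R] R).map_sum _).trans ?_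
  refine Fintype.sum_congr _ _ fun r => ?_
  exact Matrix.detRowAlternating.map_smul_univ (fun i => c (r i)) (fun i => a (r i) i)

theorem sum_prod_mul_sum_perm_comp [Fintype ι] {R : Type*} [CommSemiring R] (c : ι → R)
    (D : (n → ι) → R) :
    ∑ r : n → ι, (∏ i, c (r i)) * ∑ σ : Equiv.Perm n, D (r ∘ σ)
      = (Fintype.card n).factorial • ∑ r : n → ι, (∏ i, c (r i)) * D r := by
  have hreindex : ∀ σ : Equiv.Perm n,
      ∑ r : n → ι, (∏ i, c (r i)) * D (r ∘ σ) = ∑ r : n → ι, (∏ i, c (r i)) * D r := by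
    intro σ
    refine Fintype.sum_equiv (σ.symm.arrowCongr (Equiv.refl ι)) _ _ fun r => ?_
    simp only [Equiv.arrowCongr_apply, Equiv.symm_symm, Equiv.coe_refl, Function.id_comp]
    rw [← Equiv.prod_comp σ (fun i => c (r i))]
    rfl
  simp_rw [mul_sum]
  rw [sum_comm, Fintype.sum_congr _ _ hreindex, sum_const, card_univ, Fintype.card_perm]

theorem Fintype.sum_eq_sum_const_of_not_const [Nonempty n] [Fintype ι] {M : Type*}
    [AddCommMonoid M] (f : (n → ι) → M) (hf : ∀ r : n → ι, (∃ i j, r i ≠ r j) → f r = 0) :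
    ∑ r, f r = ∑ k : ι, f (fun _ => k) := by
  inhabit n
  refine (Fintype.sum_of_injective (fun k _ => k) (fun k k' h => congrFun h default) _ _
    (fun r hr => hf r ?_) fun _ => rfl).symm
  by_contra! hconst
  exact hr ⟨r default, funext fun i => hconst _ _⟩

theorem det_sum_smul_of_sum_perm_mixedRowDet_eq_zero [Nonempty n] [Fintype ι] {R : Type*}
    [CommRing R] [IsDomain R] [CharZero R] (c : ι → R) (a : ι → Matrix n n R)
    (h : ∀ r : n → ι, (∃ i j, r i ≠ r j) → ∑ σ : Equiv.Perm n, mixedRowDet a (r ∘ σ) = 0) :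
    (∑ k, c k • a k).det = ∑ k, c k ^ Fintype.card n * (a k).det := by
  refine mul_left_cancel₀ (Nat.cast_ne_zero.mpr (Fintype.card n).factorial_ne_zero) ?_
  calc ((Fintype.card n).factorial : R) * (∑ k, c k • a k).det
      = ∑ r : n → ι, (∏ i, c (r i)) * ∑ σ : Equiv.Perm n, mixedRowDet a (r ∘ σ) := by
        rw [sum_prod_mul_sum_perm_comp, nsmul_eq_mul, det_sum_smul]
    _ = ∑ k, (∏ _i : n, c k) * ∑ _σ : Equiv.Perm n, (a k).det :=
        Fintype.sum_eq_sum_const_of_not_const _ fun r hr => by rw [h r hr, mul_zero]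
    _ = ((Fintype.card n).factorial : R) * ∑ k, c k ^ Fintype.card n * (a k).det := by
        simp only [prod_const, sum_const, card_univ, Fintype.card_perm, nsmul_eq_mul, mul_sum]
        exact Fintype.sum_congr _ _ fun k => by ring

end MixedRowDet

theorem tauTensor_eq_mul_sum_perm (d m : ℕ) (a : Fin m → Matrix (Fin d) (Fin d) ℂ)
    (k : Fin d → Fin m) :
    tauTensor d m a k
      = ((Real.sqrt d ^ d / d.factorial : ℝ) : ℂ) * ∑ σ : Equiv.Perm (Fin d), mixedRowDet a (k ∘ σ) :=
  rfl

theorem tauTensor_eq_zero_iff (d m : ℕ) (a : Fin m → Matrix (Fin d) (Fin d) ℂ)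
    (k : Fin d → Fin m) :
    tauTensor d m a k = 0 ↔ ∑ σ : Equiv.Perm (Fin d), mixedRowDet a (k ∘ σ) = 0 := by
  have hscale : (Real.sqrt d ^ d / d.factorial : ℝ) ≠ 0 := by
    rcases d with _ | d
    · simp
    · positivity
  rw [tauTensor_eq_mul_sum_perm, mul_eq_zero, or_iff_right (Complex.ofReal_ne_zero.mpr hscale)]

theorem tauTensor_const (d m : ℕ) (a : Fin m → Matrix (Fin d) (Fin d) ℂ) (c : Fin m) :
    tauTensor d m a (fun _ => c) = ((Real.sqrt d ^ d : ℝ) : ℂ) * (a c).det := by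
  have hfac : (d.factorial : ℂ) ≠ 0 := Nat.cast_ne_zero.mpr d.factorial_ne_zero
  rw [tauTensor_eq_mul_sum_perm]
  simp only [Function.comp_def, mixedRowDet_const, sum_const, card_univ, Fintype.card_perm,
    Fintype.card_fin, nsmul_eq_mul]
  push_cast
  field_simp

theorem inv_sqrt_pow_self_rpow_two_div {d : ℕ} (hd : d ≠ 0) :
    ((Real.sqrt d ^ d)⁻¹) ^ ((2 : ℝ) / d) = (d : ℝ)⁻¹ := by
  rw [Real.inv_rpow (by positivity), ← Real.rpow_natCast, ← Real.rpow_mul (Real.sqrt_nonneg _),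
    mul_div_cancel₀ _ (Nat.cast_ne_zero.mpr hd), Real.rpow_two, Real.sq_sqrt d.cast_nonneg]

theorem det_of_diagonal_tauTensor_decomposition_general
    (d m : ℕ) (hd : 1 ≤ d)
    (a : Fin m → Matrix (Fin d) (Fin d) ℂ) (lam : Fin m → ℂ)
    (hdiag : ∀ c : Fin m, tauTensor d m a (fun _ => c) = lam c)
    (hoff : ∀ k : Fin d → Fin m, (∃ i j, k i ≠ k j) → tauTensor d m a k = 0)
    (U : Matrix (Fin m) (Fin m) ℂ)
    (b : Fin m → Matrix (Fin d) (Fin d) ℂ)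
    (hb : ∀ l, b l = ∑ k, U l k • a k) :
    ∀ l : Fin m,
      (b l).det = (((Real.sqrt d ^ d)⁻¹ : ℝ) : ℂ) * ∑ k : Fin m, (U l k) ^ d * lam k ∧
      (d : ℝ) * ‖(b l).det‖ ^ ((2 : ℝ) / d)
        = ‖∑ k : Fin m, (U l k) ^ d * lam k‖ ^ ((2 : ℝ) / d) := by
  intro l
  have hd0 : d ≠ 0 := Nat.one_le_iff_ne_zero.mp hd
  have : Nonempty (Fin d) := ⟨⟨0, hd⟩⟩
  have hscale : (Real.sqrt d ^ d : ℝ) ≠ 0 := by positivity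
  have hdet_a : ∀ k, (a k).det = (((Real.sqrt d ^ d)⁻¹ : ℝ) : ℂ) * lam k := fun k => by
    rw [← hdiag k, tauTensor_const, ← mul_assoc, ← Complex.ofReal_mul, inv_mul_cancel₀ hscale,
      Complex.ofReal_one, one_mul]
  have hdet : (b l).det = (((Real.sqrt d ^ d)⁻¹ : ℝ) : ℂ) * ∑ k, (U l k) ^ d * lam k := by
    rw [hb, det_sum_smul_of_sum_perm_mixedRowDet_eq_zero _ _
      fun r hr => (tauTensor_eq_zero_iff d m a r).mp (hoff r hr), Fintype.card_fin, mul_sum]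
    simp_rw [hdet_a, mul_left_comm]
  refine ⟨hdet, ?_⟩
  rw [hdet, norm_mul, Complex.norm_real, Real.norm_of_nonneg (by positivity),
    Real.mul_rpow (by positivity) (norm_nonneg _), inv_sqrt_pow_self_rpow_two_div hd0,
    ← mul_assoc, mul_inv_cancel₀ (Nat.cast_ne_zero.mpr hd0), one_mul]

/-- **Determinants in a decomposition arising from a diagonal τ-tensor.** If the τ-tensor
of the family `a` is diagonal with diagonal entries `λ_k`, and `b l = ∑ k, U l k • a k`
for a unitary `U`, then `det (b l) = d^{-d/2} ∑_k (U_{lk})^d λ_k`; hence the G-concurrence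
of the sub-normalized state with coefficient matrix `b l` is
`d |det (b l)|^{2/d} = |∑_k (U_{lk})^d λ_k|^{2/d}`. -/
theorem det_of_diagonal_tauTensor_decomposition
    (d m : ℕ) (hd : 1 ≤ d) (hm : 1 ≤ m)
    (a : Fin m → Matrix (Fin d) (Fin d) ℂ) (lam : Fin m → ℂ)
    (hdiag : ∀ c : Fin m, tauTensor d m a (fun _ => c) = lam c)
    (hoff : ∀ k : Fin d → Fin m, (∃ i j, k i ≠ k j) → tauTensor d m a k = 0)
    (U : Matrix (Fin m) (Fin m) ℂ) (hU : U ∈ Matrix.unitaryGroup (Fin m) ℂ)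
    (b : Fin m → Matrix (Fin d) (Fin d) ℂ)
    (hb : ∀ l, b l = ∑ k, U l k • a k) :
    ∀ l : Fin m,
      (b l).det = (((Real.sqrt d ^ d)⁻¹ : ℝ) : ℂ) * ∑ k : Fin m, (U l k) ^ d * lam k ∧
      (d : ℝ) * ‖(b l).det‖ ^ ((2 : ℝ) / d)
        = ‖∑ k : Fin m, (U l k) ^ d * lam k‖ ^ ((2 : ℝ) / d) :=
  det_of_diagonal_tauTensor_decomposition_general d m hd a lam hdiag hoff U b hb
end

section
/- Let d ≥ 1 and let μ_1, …, μ_{d²} be arbitrary complex numbers (for instance μ_k = λ_k e^{iθ_k} with λ_k ≥ 0 and phases θ_k ∈ ℝ). Then there exists a d²×d² complex unitary matrix U such that for every row index l ∈ {1, …, d²}: ∑_{k=1}^{d²} (U_{lk})^d μ_k = d^{−d} · ∑_{k=1}^{d²} μ_k. Consequently | ∑_{k} (U_{lk})^d μ_k |^{2/d} = d^{−2} · | ∑_k μ_k |^{2/d} for every l. -/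
/-!
Let `F = (ζ^{ab})_{a,b < d}` be the discrete Fourier matrix of a primitive `d`-th root of unity
`ζ`, so that `F Fᴴ = d · 1`. Then `U = d⁻¹ (F ⊗ F)`, reindexed by `Fin (d²)`, is unitary, and every
entry of `U` is `d⁻¹` times a `d`-th root of unity, so `(U_{lk})^d = d^{-d}` for all `l, k`.
-/

open scoped BigOperators Matrix Kronecker

theorem Finset.sum_range_pow_of_pow_eq_one {K : Type*} [Field K] [DecidableEq K] {w : K} {n : ℕ}
    (hw : w ^ n = 1) : ∑ c ∈ Finset.range n, w ^ c = if w = 1 then (n : K) else 0 := by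
  split_ifs with h
  · simp [h]
  · have : (1 - w) * ∑ c ∈ Finset.range n, w ^ c = 0 := by rw [mul_neg_geom_sum, hw, sub_self]
    exact (mul_eq_zero.mp this).resolve_left (sub_ne_zero.mpr (Ne.symm h))

namespace Matrix

theorem submatrix_mem_unitaryGroup {m n α : Type*} [Fintype m] [DecidableEq m] [Fintype n]
    [DecidableEq n] [CommRing α] [StarRing α] {U : Matrix n n α} (e : m ≃ n)
    (hU : U ∈ unitaryGroup n α) : U.submatrix e e ∈ unitaryGroup m α := by
  rw [mem_unitaryGroup_iff, star_eq_conjTranspose, conjTranspose_submatrix,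
    submatrix_mul_equiv, ← star_eq_conjTranspose, hU.2, submatrix_one_equiv]

theorem inv_natCast_smul_kronecker_mem_unitaryGroup {m n : Type*} [Fintype m] [DecidableEq m]
    [Fintype n] [DecidableEq n] {A : Matrix m m ℂ} {B : Matrix n n ℂ} {k : ℕ} (hk : k ≠ 0)
    (hA : A * Aᴴ = (k : ℂ) • 1) (hB : B * Bᴴ = (k : ℂ) • 1) :
    (k : ℂ)⁻¹ • (A ⊗ₖ B) ∈ unitaryGroup (m × n) ℂ := by
  have hk' : (k : ℂ) ≠ 0 := Nat.cast_ne_zero.mpr hk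
  rw [mem_unitaryGroup_iff, star_eq_conjTranspose, conjTranspose_smul, conjTranspose_kronecker,
    smul_mul_smul_comm, ← mul_kronecker_mul, hA, hB, smul_kronecker, kronecker_smul,
    one_kronecker_one, star_inv₀, star_natCast, smul_smul, smul_smul,
    show (k : ℂ)⁻¹ * (k : ℂ)⁻¹ * k * k = 1 by field_simp, one_smul]

end Matrix

def dftMatrix {R : Type*} [Monoid R] {n : ℕ} (ζ : R) : Matrix (Fin n) (Fin n) R :=
  Matrix.of fun a b => ζ ^ ((a : ℕ) * b)

theorem dftMatrix_apply_pow_self {R : Type*} [CommMonoid R] {n : ℕ} {ζ : R}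
    (hζ : IsPrimitiveRoot ζ n) (a b : Fin n) : dftMatrix ζ a b ^ n = 1 := by
  rw [dftMatrix, Matrix.of_apply, ← pow_mul, mul_comm, pow_mul, hζ.pow_eq_one, one_pow]

theorem dftMatrix_mul_conjTranspose {n : ℕ} {ζ : ℂ} (hζ : IsPrimitiveRoot ζ n) :
    dftMatrix ζ * (dftMatrix ζ)ᴴ = (n : ℂ) • (1 : Matrix (Fin n) (Fin n) ℂ) := by
  ext a a'
  have hn : n ≠ 0 := a.pos.ne'
  have hζ0 : ζ ≠ 0 := hζ.ne_zero hn
  have hstar : star ζ = ζ⁻¹ := (Complex.inv_eq_conj (hζ.norm'_eq_one hn)).symm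
  have hw1 : ζ ^ (a : ℕ) * ζ⁻¹ ^ (a' : ℕ) = 1 ↔ a = a' := by
    rw [inv_pow, mul_inv_eq_one₀ (pow_ne_zero _ hζ0)]
    exact ⟨fun h => Fin.ext (hζ.pow_inj a.isLt a'.isLt h), fun h => h ▸ rfl⟩
  have hwn : (ζ ^ (a : ℕ) * ζ⁻¹ ^ (a' : ℕ)) ^ n = 1 := by
    rw [mul_pow, ← pow_mul, ← pow_mul, mul_comm _ n, mul_comm _ n, pow_mul, pow_mul, inv_pow,
      hζ.pow_eq_one, inv_one, one_pow, one_pow, one_mul]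
  calc (dftMatrix ζ * (dftMatrix ζ)ᴴ : Matrix (Fin n) (Fin n) ℂ) a a'
      = ∑ c : Fin n, (ζ ^ (a : ℕ) * ζ⁻¹ ^ (a' : ℕ)) ^ (c : ℕ) := by
        simp only [Matrix.mul_apply, Matrix.conjTranspose_apply, dftMatrix, Matrix.of_apply,
          star_pow, hstar, mul_pow, ← pow_mul]
    _ = ((n : ℂ) • (1 : Matrix (Fin n) (Fin n) ℂ)) a a' := by
        rw [Fin.sum_univ_eq_sum_range (fun c => (ζ ^ (a : ℕ) * ζ⁻¹ ^ (a' : ℕ)) ^ c),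
          Finset.sum_range_pow_of_pow_eq_one hwn, Matrix.smul_apply, Matrix.one_apply]
        simp only [hw1, smul_eq_mul, mul_ite, mul_one, mul_zero]

theorem norm_inv_natCast_pow_self_mul_rpow_two_div {𝕜 : Type*} [RCLike 𝕜] {d : ℕ} (hd : d ≠ 0)
    (z : 𝕜) : ‖((d : 𝕜) ^ d)⁻¹ * z‖ ^ ((2 : ℝ) / d) = ((d : ℝ) ^ 2)⁻¹ * ‖z‖ ^ ((2 : ℝ) / d) := by
  have hd' : (0 : ℝ) < d := Nat.cast_pos.mpr (Nat.pos_of_ne_zero hd)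
  rw [norm_mul, norm_inv, norm_pow, RCLike.norm_natCast,
    Real.mul_rpow (by positivity) (norm_nonneg z), Real.inv_rpow (by positivity),
    ← Real.rpow_natCast, ← Real.rpow_mul hd'.le, mul_div_cancel₀ _ hd'.ne', Real.rpow_two]

/-- **Lemma 5 in unitary form.** For arbitrary complex numbers `μ₁, …, μ_{d²}` there is a
`d² × d²` unitary `U` such that for every row `l`,
`∑_k (U_{lk})^d μ_k = d^{-d} ∑_k μ_k`; consequently
`|∑_k (U_{lk})^d μ_k|^{2/d} = d^{-2} |∑_k μ_k|^{2/d}` for every `l`. -/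
theorem exists_unitary_row_sums_eq
    (d : ℕ) (hd : 1 ≤ d) (mu : Fin (d ^ 2) → ℂ) :
    ∃ U : Matrix (Fin (d ^ 2)) (Fin (d ^ 2)) ℂ,
      U ∈ Matrix.unitaryGroup (Fin (d ^ 2)) ℂ ∧
      (∀ l, ∑ k, (U l k) ^ d * mu k = ((d : ℂ) ^ d)⁻¹ * ∑ k, mu k) ∧
      (∀ l, ‖∑ k, (U l k) ^ d * mu k‖ ^ ((2 : ℝ) / d)
          = ((d : ℝ) ^ 2)⁻¹ * ‖∑ k, mu k‖ ^ ((2 : ℝ) / d)) := by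
  have hd0 : d ≠ 0 := Nat.one_le_iff_ne_zero.mp hd
  obtain ⟨ζ, hζ⟩ : ∃ ζ : ℂ, IsPrimitiveRoot ζ d := ⟨_, Complex.isPrimitiveRoot_exp d hd0⟩
  let ι : Fin (d ^ 2) ≃ Fin d × Fin d := (finCongr (sq d)).trans finProdFinEquiv.symm
  let U := ((d : ℂ)⁻¹ • (dftMatrix ζ ⊗ₖ dftMatrix ζ)).submatrix ι ι
  have hU : U ∈ Matrix.unitaryGroup (Fin (d ^ 2)) ℂ :=
    Matrix.submatrix_mem_unitaryGroup ι <| Matrix.inv_natCast_smul_kronecker_mem_unitaryGroup hd0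
      (dftMatrix_mul_conjTranspose hζ) (dftMatrix_mul_conjTranspose hζ)
  have hpow : ∀ l k, U l k ^ d = ((d : ℂ) ^ d)⁻¹ := fun l k => by
    simp only [U, Matrix.submatrix_apply, Matrix.smul_apply, Matrix.kroneckerMap_apply,
      smul_eq_mul, mul_pow, dftMatrix_apply_pow_self hζ, inv_pow, mul_one]
  have hrow : ∀ l, ∑ k, U l k ^ d * mu k = ((d : ℂ) ^ d)⁻¹ * ∑ k, mu k := fun l => by
    simp only [hpow, Finset.mul_sum]
  exact ⟨U, hU, hrow, fun l => by rw [hrow, norm_inv_natCast_pow_self_mul_rpow_two_div hd0]⟩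
end
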